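/- If there exist local linear maps transforming W^{⊗m} into GHZ^{⊗n} (party-wise regrouped), then n/(m+1) ≤ (1/2)·log₂ 7. -/

import Mathlib

/-!
Local linear maps cannot increase tensor rank, so `2 ^ n = rk (GHZ^{⊗n}) ≤ rk (W^{⊗m})`; the lower
bound holds because the contractions of `GHZ^{⊗n}` against its last two factors span all of
`(ℂ²)^{⊗n}`.

For the upper bound, the product vector `v_x = ⊗ₖ (|0⟩ + xₖ |1⟩)` has
`⟨s, t, u | v_x^{⊗3}⟩ = ∏ₖ xₖ ^ cₖ`, where `cₖ` counts the ones among `sₖ, tₖ, uₖ`, whereas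
`W^{⊗m}` has coefficient `∏ₖ [cₖ = 1]`. Averaging over the `2 ^ m` sign patterns `xₖ = ±ε` keeps
only odd `cₖ` and yields `(2ε) ^ m P (ε²)` with `deg P ≤ m` and `P 0 = ∏ₖ [cₖ = 1]`; Lagrange
interpolation at `m + 1` values of `ε²` recovers `P 0`. Hence `rk (W^{⊗m}) ≤ (m + 1) 2 ^ m`, and
`4 ^ n ≤ (m + 1) ^ 2 4 ^ m ≤ 7 ^ (m + 1)`.
-/

open TensorProduct

/-- Tripartite tensor rank: minimal number of product vectors summing to `ψ`. -/
noncomputable def tRank {A B C : Type*} [AddCommGroup A] [Module ℂ A]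
    [AddCommGroup B] [Module ℂ B] [AddCommGroup C] [Module ℂ C]
    (ψ : A ⊗[ℂ] (B ⊗[ℂ] C)) : ℕ :=
  sInf {r | ∃ (a : Fin r → A) (b : Fin r → B) (c : Fin r → C),
    ψ = ∑ i, a i ⊗ₜ[ℂ] (b i ⊗ₜ[ℂ] c i)}

/-- `(ℂ²)^{⊗n}`, realized as functions on `n`-bit strings. -/
abbrev V (n : ℕ) : Type := (Fin n → Bool) → ℂ

/-- the computational-basis vector `|s⟩` of `n` qubits. -/
noncomputable def qb {n : ℕ} (s : Fin n → Bool) : V n := Pi.single s 1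

/-- `W^{⊗n}` regrouped party-wise: in copy `k` the excitation goes to party `f k`. -/
noncomputable def Wn (n : ℕ) : V n ⊗[ℂ] (V n ⊗[ℂ] V n) :=
  ∑ f : Fin n → Fin 3,
    qb (fun k => decide (f k = 0)) ⊗ₜ[ℂ]
      (qb (fun k => decide (f k = 1)) ⊗ₜ[ℂ] qb (fun k => decide (f k = 2)))

/-- `GHZ^{⊗n}` regrouped party-wise: `∑ₓ |x⟩|x⟩|x⟩`. -/
noncomputable def GHZn (n : ℕ) : V n ⊗[ℂ] (V n ⊗[ℂ] V n) :=
  ∑ x : Fin n → Bool, qb x ⊗ₜ[ℂ] (qb x ⊗ₜ[ℂ] qb x)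

open Module Polynomial

section TensorRank

variable {A B C : Type*} [AddCommGroup A] [Module ℂ A] [AddCommGroup B] [Module ℂ B]
  [AddCommGroup C] [Module ℂ C]

theorem exists_eq_sum_tmul_tmul (ψ : A ⊗[ℂ] (B ⊗[ℂ] C)) :
    ∃ r, ∃ (a : Fin r → A) (b : Fin r → B) (c : Fin r → C),
      ψ = ∑ i, a i ⊗ₜ[ℂ] (b i ⊗ₜ[ℂ] c i) := by
  have hspan : ψ ∈ Submodule.span ℂ {t | ∃ a b c, a ⊗ₜ[ℂ] (b ⊗ₜ[ℂ] c) = t} := by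
    induction ψ using TensorProduct.induction_on with
    | zero => exact zero_mem _
    | tmul a x =>
      induction x using TensorProduct.induction_on with
      | zero => rw [tmul_zero]; exact zero_mem _
      | tmul b c => exact Submodule.subset_span ⟨a, b, c, rfl⟩
      | add x y hx hy => rw [tmul_add]; exact add_mem hx hy
    | add _ _ h₁ h₂ => exact add_mem h₁ h₂
  obtain ⟨r, f, g, hfg⟩ := Submodule.mem_span_set'.mp hspan
  choose a b c habc using fun i => (g i).2
  exact ⟨r, fun i => f i • a i, b, c, by simp only [← hfg, ← habc, smul_tmul']⟩

theorem exists_eq_sum_tmul_tmul_of_tRank (ψ : A ⊗[ℂ] (B ⊗[ℂ] C)) :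
    ∃ (a : Fin (tRank ψ) → A) (b : Fin (tRank ψ) → B) (c : Fin (tRank ψ) → C),
      ψ = ∑ i, a i ⊗ₜ[ℂ] (b i ⊗ₜ[ℂ] c i) :=
  Nat.sInf_mem (exists_eq_sum_tmul_tmul ψ)

theorem tRank_le_card {ι : Type*} [Fintype ι] {ψ : A ⊗[ℂ] (B ⊗[ℂ] C)}
    (a : ι → A) (b : ι → B) (c : ι → C) (h : ψ = ∑ i, a i ⊗ₜ[ℂ] (b i ⊗ₜ[ℂ] c i)) :
    tRank ψ ≤ Fintype.card ι := by
  let e := Fintype.equivFin ι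
  refine Nat.sInf_le ⟨a ∘ e.symm, b ∘ e.symm, c ∘ e.symm, ?_⟩
  rw [h]
  exact Fintype.sum_equiv e _ _ fun i => by simp

theorem tRank_map_le {A' B' C' : Type*} [AddCommGroup A'] [Module ℂ A'] [AddCommGroup B']
    [Module ℂ B'] [AddCommGroup C'] [Module ℂ C'] (LA : A →ₗ[ℂ] A') (LB : B →ₗ[ℂ] B')
    (LC : C →ₗ[ℂ] C') (ψ : A ⊗[ℂ] (B ⊗[ℂ] C)) :
    tRank (TensorProduct.map LA (TensorProduct.map LB LC) ψ) ≤ tRank ψ := by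
  obtain ⟨a, b, c, hψ⟩ := exists_eq_sum_tmul_tmul_of_tRank ψ
  refine (tRank_le_card (LA ∘ a) (LB ∘ b) (LC ∘ c) ?_).trans (Fintype.card_fin _).le
  simp only [hψ, map_sum, TensorProduct.map_tmul, Function.comp_apply]

end TensorRank

noncomputable def cubeBasis (α : Type*) [Fintype α] :
    Basis (α × α × α) ℂ ((α → ℂ) ⊗[ℂ] ((α → ℂ) ⊗[ℂ] (α → ℂ))) :=
  (Pi.basisFun ℂ α).tensorProduct ((Pi.basisFun ℂ α).tensorProduct (Pi.basisFun ℂ α))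

@[simp]
theorem cubeBasis_repr_tmul {α : Type*} [Fintype α] (a b c : α → ℂ) (s t u : α) :
    (cubeBasis α).repr (a ⊗ₜ[ℂ] (b ⊗ₜ[ℂ] c)) (s, t, u) = a s * (b t * c u) := by
  simp [cubeBasis, mul_comm]

theorem cubeBasis_repr_GHZn_diag {n : ℕ} (s x : Fin n → Bool) :
    (cubeBasis _).repr (GHZn n) (s, x, x) = qb x s := by
  simp [GHZn, qb, Pi.single_apply]

theorem two_pow_le_card_of_GHZn_eq_sum {n : ℕ} {ι : Type*} [Fintype ι] (a b c : ι → V n)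
    (h : GHZn n = ∑ i, a i ⊗ₜ[ℂ] (b i ⊗ₜ[ℂ] c i)) : 2 ^ n ≤ Fintype.card ι := by
  have hqb : ∀ x, qb x = ∑ i, (b i x * c i x) • a i := fun x => funext fun s => by
    simpa [cubeBasis_repr_GHZn_diag, mul_comm] using
      congrArg (fun ψ => (cubeBasis _).repr ψ (s, x, x)) h
  have hspan : Submodule.span ℂ (Set.range a) = ⊤ := by
    rw [eq_top_iff, ← (Pi.basisFun ℂ (Fin n → Bool)).span_eq, Submodule.span_le]
    rintro _ ⟨x, rfl⟩
    rw [Pi.basisFun_apply, ← qb, hqb x]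
    exact Submodule.sum_mem _ fun i _ => Submodule.smul_mem _ _ (Submodule.subset_span ⟨i, rfl⟩)
  calc 2 ^ n = finrank ℂ (V n) := by simp [Module.finrank_fintype_fun_eq_card]
    _ = Set.finrank ℂ (Set.range a) := by rw [Set.finrank, hspan, finrank_top]
    _ ≤ Fintype.card ι := finrank_range_le_card a

theorem two_pow_le_tRank_GHZn (n : ℕ) : 2 ^ n ≤ tRank (GHZn n) := by
  obtain ⟨a, b, c, h⟩ := exists_eq_sum_tmul_tmul_of_tRank (GHZn n)
  simpa using two_pow_le_card_of_GHZn_eq_sum a b c h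

def countTrue (a b c : Bool) : ℕ := a.toNat + b.toNat + c.toNat

theorem countTrue_le_three (a b c : Bool) : countTrue a b c ≤ 3 := by
  cases a <;> cases b <;> cases c <;> decide

theorem qb_apply {n : ℕ} (x s : Fin n → Bool) : qb x s = ∏ k, if x k = s k then 1 else 0 := by
  rw [Finset.prod_boole]
  simp [qb, Pi.single_apply, funext_iff, eq_comm]

theorem cubeBasis_repr_Wn {m : ℕ} (s t u : Fin m → Bool) :
    (cubeBasis _).repr (Wn m) (s, t, u) =
      ∏ k, if countTrue (s k) (t k) (u k) = 1 then 1 else 0 := by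
  have hcopy : ∀ a b c : Bool, (if countTrue a b c = 1 then (1 : ℂ) else 0) =
      ∑ j : Fin 3, (if decide (j = 0) = a then 1 else 0) *
        ((if decide (j = 1) = b then 1 else 0) * if decide (j = 2) = c then 1 else 0) := by
    intro a b c
    cases a <;> cases b <;> cases c <;> simp [Fin.sum_univ_three, countTrue]
  simp only [Wn, map_sum, Finsupp.coe_finsetSum, Finset.sum_apply, cubeBasis_repr_tmul, qb_apply,
    ← Finset.prod_mul_distrib, hcopy, Fintype.prod_sum]

noncomputable def prodVec {m : ℕ} (x : Fin m → ℂ) : V m := fun s => ∏ k, if s k then x k else 1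

theorem prodVec_mul_prodVec_mul_prodVec {m : ℕ} (x : Fin m → ℂ) (s t u : Fin m → Bool) :
    prodVec x s * (prodVec x t * prodVec x u) = ∏ k, x k ^ countTrue (s k) (t k) (u k) := by
  simp only [prodVec, ← Finset.prod_mul_distrib]
  refine Finset.prod_congr rfl fun k _ => ?_
  cases s k <;> cases t k <;> cases u k <;> simp [countTrue] <;> ring

theorem sum_prod_sign_mul_pow {R ι : Type*} [CommRing R] [Fintype ι] [DecidableEq ι]
    (ε : R) (c : ι → ℕ) :
    ∑ σ : ι → Bool, ∏ k, (if σ k then 1 else -1) * ((if σ k then 1 else -1) * ε) ^ c k =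
      ∏ k, (ε ^ c k - (-ε) ^ c k) := by
  have hbool : ∀ k, ε ^ c k - (-ε) ^ c k =
      ∑ b : Bool, (if b then 1 else -1) * ((if b then 1 else -1) * ε) ^ c k := by
    simp [sub_eq_add_neg]
  simp only [hbool, Fintype.prod_sum]

theorem exists_sum_mul_eval_eq_eval {F ι : Type*} [Field F] [Fintype ι] [DecidableEq ι]
    {y : ι → F} (hy : Function.Injective y) (z : F) :
    ∃ w : ι → F, ∀ P : F[X], P.degree < Fintype.card ι → ∑ i, w i * P.eval (y i) = P.eval z := by
  refine ⟨fun i => (Lagrange.basis Finset.univ y i).eval z, fun P hP => ?_⟩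
  conv_rhs => rw [Lagrange.eq_interpolate (s := Finset.univ) hy.injOn hP]
  simp [Lagrange.interpolate_apply, eval_finsetSum, mul_comm]

noncomputable def oddPart (c : ℕ) : ℂ[X] := if c = 1 then 1 else if c = 3 then X else 0

theorem pow_sub_neg_pow_eq_oddPart {c : ℕ} (hc : c ≤ 3) (ε : ℂ) :
    ε ^ c - (-ε) ^ c = 2 * ε * (oddPart c).eval (ε ^ 2) := by
  interval_cases c <;> simp [oddPart] <;> ring

theorem natDegree_oddPart_le (c : ℕ) : (oddPart c).natDegree ≤ 1 := by
  unfold oddPart; split_ifs <;> simp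

theorem eval_zero_oddPart (c : ℕ) : (oddPart c).eval 0 = if c = 1 then 1 else 0 := by
  unfold oddPart; split_ifs <;> simp_all

theorem sum_prod_sign_mul_pow_eq_oddPart {ι : Type*} [Fintype ι] [DecidableEq ι] (ε : ℂ)
    {c : ι → ℕ} (hc : ∀ k, c k ≤ 3) :
    ∑ σ : ι → Bool, ∏ k, (if σ k then 1 else -1) * ((if σ k then 1 else -1) * ε) ^ c k =
      (2 * ε) ^ Fintype.card ι * (∏ k, oddPart (c k)).eval (ε ^ 2) := by
  rw [sum_prod_sign_mul_pow, eval_prod, ← Finset.card_univ, ← Finset.prod_const,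
    ← Finset.prod_mul_distrib]
  exact Finset.prod_congr rfl fun k _ => pow_sub_neg_pow_eq_oddPart (hc k) ε

theorem Wn_eq_sum_cubes (m : ℕ) :
    ∃ (w : Fin (m + 1) × (Fin m → Bool) → ℂ) (x : Fin (m + 1) × (Fin m → Bool) → Fin m → ℂ),
      Wn m = ∑ i, w i • prodVec (x i) ⊗ₜ[ℂ] (prodVec (x i) ⊗ₜ[ℂ] prodVec (x i)) := by
  set ε : Fin (m + 1) → ℂ := fun j => (j : ℕ) + 1
  have hε : ∀ j, ε j ≠ 0 := fun j => by simp only [ε]; exact_mod_cast Nat.succ_ne_zero j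
  have hinj : Function.Injective fun j => ε j ^ 2 := fun i j hij => by
    simp only [ε] at hij
    have : ((i : ℕ) + 1) ^ 2 = ((j : ℕ) + 1) ^ 2 := by exact_mod_cast hij
    exact Fin.ext (by simpa using this)
  obtain ⟨w, hw⟩ := exists_sum_mul_eval_eq_eval hinj 0
  refine ⟨fun i => w i.1 / (2 * ε i.1) ^ m * ∏ k, (if i.2 k then 1 else -1),
    fun i k => (if i.2 k then 1 else -1) * ε i.1, ?_⟩
  refine (cubeBasis _).ext_elem fun ⟨s, t, u⟩ => ?_
  set c := fun k => countTrue (s k) (t k) (u k)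
  have hP : (∏ k, oddPart (c k)).degree < Fintype.card (Fin (m + 1)) := by
    refine (degree_le_natDegree).trans_lt ?_
    have := (natDegree_prod_le Finset.univ fun k => oddPart (c k)).trans
      (Finset.sum_le_sum fun k _ => natDegree_oddPart_le (c k))
    simp only [Finset.sum_const, Finset.card_univ, Fintype.card_fin, smul_eq_mul, mul_one]
      at this ⊢
    exact_mod_cast Nat.lt_succ_of_le this
  simp only [cubeBasis_repr_Wn, map_sum, map_smul, Finsupp.coe_finsetSum, Finset.sum_apply,
    Finsupp.smul_apply, cubeBasis_repr_tmul, prodVec_mul_prodVec_mul_prodVec, smul_eq_mul,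
    Fintype.sum_prod_type]
  calc ∏ k, (if c k = 1 then 1 else 0) = (∏ k, oddPart (c k)).eval 0 := by
        simp [eval_prod, eval_zero_oddPart]
    _ = ∑ j, w j * (∏ k, oddPart (c k)).eval (ε j ^ 2) := (hw _ hP).symm
    _ = _ := Finset.sum_congr rfl fun j _ => by
        simp only [mul_assoc, ← Finset.prod_mul_distrib, ← Finset.mul_sum,
          sum_prod_sign_mul_pow_eq_oddPart (ε j) fun k => countTrue_le_three _ _ _]
        rw [Fintype.card_fin, ← mul_assoc,
          div_mul_cancel₀ _ (pow_ne_zero _ (mul_ne_zero two_ne_zero (hε j)))]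

theorem tRank_Wn_le (m : ℕ) : tRank (Wn m) ≤ (m + 1) * 2 ^ m := by
  obtain ⟨w, x, h⟩ := Wn_eq_sum_cubes m
  refine (tRank_le_card (fun i => w i • prodVec (x i)) (fun i => prodVec (x i))
    (fun i => prodVec (x i)) (by simp only [h, smul_tmul'])).trans_eq ?_
  simp

theorem sq_succ_mul_four_pow_le_seven_pow (m : ℕ) : (m + 1) ^ 2 * 4 ^ m ≤ 7 ^ (m + 1) := by
  induction m with
  | zero => norm_num
  | succ k ih =>
    rcases Nat.lt_or_ge k 3 with hk | hk
    · interval_cases k <;> norm_num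
    · have h1 : 4 * (k + 2) ^ 2 ≤ 7 * (k + 1) ^ 2 := by nlinarith
      calc (k + 1 + 1) ^ 2 * 4 ^ (k + 1) = 4 * (k + 2) ^ 2 * 4 ^ k := by ring
        _ ≤ 7 * (k + 1) ^ 2 * 4 ^ k := Nat.mul_le_mul_right _ h1
        _ = 7 * ((k + 1) ^ 2 * 4 ^ k) := by ring
        _ ≤ 7 * 7 ^ (k + 1) := Nat.mul_le_mul_left _ ih
        _ = 7 ^ (k + 1 + 1) := by ring

theorem div_succ_le_half_logb_of_four_pow_le {n m : ℕ} (h : 4 ^ n ≤ 7 ^ (m + 1)) :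
    (n : ℝ) / (m + 1) ≤ 1 / 2 * Real.logb 2 7 := by
  have hlog := Real.logb_le_logb_of_le (b := 2) one_lt_two (by positivity)
    (show ((4 ^ n : ℕ) : ℝ) ≤ ((7 ^ (m + 1) : ℕ) : ℝ) by exact_mod_cast h)
  have hlog4 : Real.logb 2 4 = 2 := by
    rw [show (4 : ℝ) = 2 ^ 2 by norm_num, Real.logb_pow, Real.logb_self_eq_one one_lt_two]
    norm_num
  push_cast at hlog
  rw [Real.logb_pow, Real.logb_pow, hlog4] at hlog
  rw [div_le_iff₀ (by positivity)]
  push_cast at hlog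
  linarith

theorem W_to_GHZ_rate (m n : ℕ)
    (h : ∃ (LA LB LC : V m →ₗ[ℂ] V n),
      (TensorProduct.map LA (TensorProduct.map LB LC)) (Wn m) = GHZn n) :
    (n : ℝ) / (m + 1) ≤ (1 / 2) * Real.logb 2 7 := by
  obtain ⟨LA, LB, LC, hL⟩ := h
  have hrank : 2 ^ n ≤ (m + 1) * 2 ^ m :=
    calc 2 ^ n ≤ tRank (GHZn n) := two_pow_le_tRank_GHZn n
      _ ≤ tRank (Wn m) := hL ▸ tRank_map_le LA LB LC (Wn m)
      _ ≤ (m + 1) * 2 ^ m := tRank_Wn_le m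
  refine div_succ_le_half_logb_of_four_pow_le ?_
  calc 4 ^ n = (2 ^ n) ^ 2 := by rw [← pow_mul, mul_comm, pow_mul]; norm_num
    _ ≤ ((m + 1) * 2 ^ m) ^ 2 := Nat.pow_le_pow_left hrank 2
    _ = (m + 1) ^ 2 * 4 ^ m := by rw [mul_pow, ← pow_mul, mul_comm m, pow_mul]; norm_num
    _ ≤ 7 ^ (m + 1) := sq_succ_mul_four_pow_le_seven_pow m
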